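/- Let n ≥ 3 and let λ be a partition of n with a_k parts equal to k. The average of the statistic baj over the conjugacy class C_λ equals (n+1)(n² − n + 2a_2 − a_1² + a_1)/12. -/

import Mathlib

/-!
Conjugating by the transposition of two adjacent letters `i, i + 1` preserves a conjugacy class
and, since that transposition preserves the relative order of any two values other than `i` and
`i + 1`, it turns a descent at `i` into an ascent unless `{ω i, ω (i + 1)} = {i, i + 1}`. Hence
`2 D + F = N + S`, where `N` is the size of the class, `D` the number of its elements with a
descent at `i`, and `F`, `S` the numbers of those fixing, resp. swapping, a pair of points. By
2-transitivity `F` and `S` do not depend on the pair, and counting pairs of fixed points, resp.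
2-cycles, over the class gives `n (n - 1) F = N a₁ (a₁ - 1)` and `n (n - 1) S = 2 N a₂`. Summing
`D` against the weights `i (n - i)`, which add up to `(n - 1) n (n + 1) / 6`, gives the formula.
-/

/-- The conjugacy class of `S_n` consisting of permutations of cycle type `lam`
(Mathlib's `cycleType` omits fixed points, so we compare with the parts of `lam` not equal
to `1`). -/
noncomputable def conjClass (n : ℕ) (lam : n.Partition) : Finset (Equiv.Perm (Fin n)) :=
  Finset.univ.filter fun ω => ω.cycleType = Multiset.filter (fun i => i ≠ 1) lam.parts

/-- The successor of `i` in `Fin n`, computed modulo `n`. -/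
def succMod {n : ℕ} (i : Fin n) : Fin n := ⟨((i : ℕ) + 1) % n, Nat.mod_lt _ i.pos⟩

/-- The statistic `baj`: the sum of `i * (n - i)` over the (1-based) descent positions `i`.
A `0`-based position `i : Fin n` corresponds to the `1`-based position `i + 1`. -/
def baj {n : ℕ} (ω : Equiv.Perm (Fin n)) : ℕ :=
  ∑ i ∈ Finset.univ.filter (fun i : Fin n => (i : ℕ) + 1 < n ∧ ω (succMod i) < ω i),
    ((i : ℕ) + 1) * (n - ((i : ℕ) + 1))

open Equiv Finset

section ConjInvariant

variable {α : Type*} {C : Finset (Perm α)}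

theorem sum_conj_eq {M : Type*} [AddCommMonoid M]
    (hC : ∀ ω ∈ C, ∀ g : Perm α, g * ω * g⁻¹ ∈ C) (g : Perm α) (f : Perm α → M) :
    ∑ ω ∈ C, f (g * ω * g⁻¹) = ∑ ω ∈ C, f ω :=
  sum_nbij' (fun ω => g * ω * g⁻¹) (fun ω => g⁻¹ * ω * g) (fun ω hω => hC ω hω g)
    (fun ω hω => by simpa using hC ω hω g⁻¹) (fun ω _ => by group) (fun ω _ => by group)
    (fun _ _ => rfl)

theorem exists_perm_apply_eq_and_apply_eq [Finite α] {a b a' b' : α} (hab : a ≠ b)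
    (hab' : a' ≠ b') : ∃ g : Perm α, g a = a' ∧ g b = b' := by
  obtain ⟨g, hg⟩ := Perm.exists_extending_pair ![a, b] ![a', b']
    (by simpa [Function.Injective, Fin.forall_fin_two] using ⟨hab, hab.symm⟩)
    (by simpa [Function.Injective, Fin.forall_fin_two] using ⟨hab', hab'.symm⟩)
  exact ⟨g, hg 0, hg 1⟩

theorem card_filter_eq_of_conj_invariant [Finite α]
    (hC : ∀ ω ∈ C, ∀ g : Perm α, g * ω * g⁻¹ ∈ C)
    (Q : α → α → Perm α → Prop) [∀ a b, DecidablePred (Q a b)]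
    (hQ : ∀ (g ω : Perm α) (a b : α), Q (g a) (g b) (g * ω * g⁻¹) ↔ Q a b ω)
    {a b a' b' : α} (hab : a ≠ b) (hab' : a' ≠ b') :
    #{ω ∈ C | Q a' b' ω} = #{ω ∈ C | Q a b ω} := by
  obtain ⟨g, rfl, rfl⟩ := exists_perm_apply_eq_and_apply_eq hab hab'
  simp only [card_filter, ← sum_conj_eq hC g fun ω => if Q (g a) (g b) ω then 1 else 0, hQ]

theorem card_offDiag_mul_card_filter [Fintype α] [DecidableEq α]
    (hC : ∀ ω ∈ C, ∀ g : Perm α, g * ω * g⁻¹ ∈ C)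
    (Q : α → α → Perm α → Prop) [∀ a b, DecidablePred (Q a b)]
    (hQ : ∀ (g ω : Perm α) (a b : α), Q (g a) (g b) (g * ω * g⁻¹) ↔ Q a b ω)
    {a b : α} (hab : a ≠ b) :
    #(univ : Finset α).offDiag * #{ω ∈ C | Q a b ω}
      = ∑ ω ∈ C, #{p ∈ (univ : Finset α).offDiag | Q p.1 p.2 ω} := by
  rw [← smul_eq_mul, ← sum_const, ← sum_congr rfl fun p hp =>
    card_filter_eq_of_conj_invariant hC Q hQ hab (mem_offDiag.1 hp).2.2]
  simp only [card_filter]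
  exact sum_comm

end ConjInvariant

section Order

variable {α : Type*} [LinearOrder α] {a b x y : α}

theorem CovBy.swap_apply_lt_swap_apply_iff (h : a ⋖ b) (hab : ¬(x = a ∧ y = b))
    (hba : ¬(x = b ∧ y = a)) : swap a b x < swap a b y ↔ x < y := by
  have hlt : ∀ z, z ≠ a → z ≠ b → (a < z ↔ b < z) :=
    fun z _ hzb => ⟨fun hz => (h.ge_of_gt hz).lt_of_ne hzb.symm, h.lt.trans⟩
  have hgt : ∀ z, z ≠ a → z ≠ b → (z < a ↔ z < b) :=
    fun z hza _ => ⟨(·.trans h.lt), fun hz => (h.le_of_lt hz).lt_of_ne hza⟩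
  rcases (show x = a ∨ x = b ∨ x ≠ a ∧ x ≠ b by tauto) with hx | hx | ⟨hxa, hxb⟩ <;>
    rcases (show y = a ∨ y = b ∨ y ≠ a ∧ y ≠ b by tauto) with hy | hy | ⟨hya, hyb⟩ <;>
    subst_vars <;> simp_all [swap_apply_of_ne_of_ne]

theorem CovBy.two_mul_card_filter_lt_add [Fintype α] {C : Finset (Perm α)}
    (hC : ∀ ω ∈ C, ∀ g : Perm α, g * ω * g⁻¹ ∈ C) (h : a ⋖ b) :
    2 * #{ω ∈ C | ω b < ω a} + #{ω ∈ C | ω a = a ∧ ω b = b}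
      = #C + #{ω ∈ C | ω a = b ∧ ω b = a} := by
  have hconj : #{ω ∈ C | ω b < ω a} = #{ω ∈ C | swap a b (ω a) < swap a b (ω b)} := by
    simp only [card_filter, ← sum_conj_eq hC (swap a b) fun ω => if ω b < ω a then 1 else 0,
      Perm.mul_apply, swap_inv, swap_apply_left, swap_apply_right]
  rw [two_mul]
  nth_rw 2 [hconj]
  rw [card_eq_sum_ones C]
  simp only [card_filter, ← sum_add_distrib]
  refine sum_congr rfl fun ω _ => ?_
  have hab : ω a ≠ ω b := ω.injective.ne h.lt.ne
  by_cases h₁ : ω a = a ∧ ω b = b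
  · simp [h₁, h.lt.not_gt, h.lt.ne]
  by_cases h₂ : ω a = b ∧ ω b = a
  · simp [h₂, h.lt, h.lt.ne]
  simp only [h.swap_apply_lt_swap_apply_iff h₁ h₂, h₁, h₂, if_false]
  rcases hab.lt_or_gt with hlt | hlt <;> simp [hlt, hlt.not_gt]

end Order

namespace Equiv.Perm

variable {α : Type*} [Fintype α] [DecidableEq α]

theorem card_support_cycleOf_eq_two_iff {ω : Perm α} {x : α} (hx : ω x ≠ x) :
    #(ω.cycleOf x).support = 2 ↔ ω (ω x) = x := by
  have hdvd := (isCycleOn_support_cycleOf ω x).pow_apply_eq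
    (mem_support_cycleOf_iff.2 ⟨SameCycle.refl _ _, mem_support.2 hx⟩) (n := 2)
  rw [sq, mul_apply] at hdvd
  rw [hdvd]
  have htwo := two_le_card_support_cycleOf_iff.2 hx
  exact ⟨fun h => h ▸ dvd_rfl, fun h => (Nat.le_of_dvd two_pos h).antisymm htwo⟩

theorem card_filter_apply_apply_eq_self_and_ne (ω : Perm α) :
    #{x | ω (ω x) = x ∧ ω x ≠ x} = 2 * ω.cycleType.count 2 := by
  set t := ω.cycleFactorsFinset.filter fun c => #c.support = 2
  have hcount : ω.cycleType.count 2 = #t := by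
    rw [cycleType_def, Multiset.count_map, card, filter_val]
    simp only [Function.comp_apply, eq_comm]
  have hunion : ({x | ω (ω x) = x ∧ ω x ≠ x} : Finset α) = t.biUnion support := by
    ext x
    simp only [mem_filter, mem_univ, true_and, mem_biUnion, t]
    constructor
    · rintro ⟨h2, hx⟩
      exact ⟨ω.cycleOf x, ⟨cycleOf_mem_cycleFactorsFinset_iff.2 (mem_support.2 hx),
        (card_support_cycleOf_eq_two_iff hx).2 h2⟩, mem_support_cycleOf_iff.2
        ⟨SameCycle.refl _ _, mem_support.2 hx⟩⟩
    · rintro ⟨c, ⟨hc, hc2⟩, hxc⟩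
      have hx := mem_support.1 (mem_cycleFactorsFinset_support_le hc hxc)
      rw [cycle_is_cycleOf hxc hc, card_support_cycleOf_eq_two_iff hx] at hc2
      exact ⟨hc2, hx⟩
  rw [hunion, card_biUnion, sum_congr rfl fun c hc => (mem_filter.1 hc).2, sum_const,
    smul_eq_mul, hcount, mul_comm]
  intro c hc d hd hcd
  exact (cycleFactorsFinset_pairwise_disjoint ω (mem_filter.1 hc).1 (mem_filter.1 hd).1
    hcd).disjoint_support

theorem card_filter_offDiag_swapped (ω : Perm α) :
    #{p ∈ (univ : Finset α).offDiag | ω p.1 = p.2 ∧ ω p.2 = p.1}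
      = #{x | ω (ω x) = x ∧ ω x ≠ x} := by
  have hinj : Function.Injective fun x => (x, ω x) := fun x y h => congrArg Prod.fst h
  rw [← card_image_of_injective _ hinj]
  congr 1
  ext ⟨x, y⟩
  simp only [mem_filter, mem_offDiag, mem_univ, true_and, mem_image, Prod.mk.injEq]
  constructor
  · rintro ⟨hxy, rfl, h⟩
    exact ⟨x, ⟨h, Ne.symm hxy⟩, rfl, rfl⟩
  · rintro ⟨x, ⟨h, hx⟩, rfl, rfl⟩
    exact ⟨Ne.symm hx, rfl, h⟩

end Equiv.Perm

section ConjClass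

variable {n : ℕ} (lam : n.Partition)

theorem conj_mem_conjClass (ω : Perm (Fin n)) (hω : ω ∈ conjClass n lam) (g : Perm (Fin n)) :
    g * ω * g⁻¹ ∈ conjClass n lam := by
  simpa [conjClass, Perm.cycleType_conj] using hω

theorem Nat.Partition.sum_filter_ne_one_add_count_one :
    (lam.parts.filter (· ≠ 1)).sum + lam.parts.count 1 = n := by
  conv_rhs => rw [← lam.parts_sum, ← Multiset.sum_filter_add_sum_filter_not (· ≠ 1)]
  simp [Multiset.filter_eq']

theorem conjClass_nonempty : (conjClass n lam).Nonempty := by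
  have hsum := lam.sum_filter_ne_one_add_count_one
  obtain ⟨ω, hω⟩ :=
    (Perm.exists_with_cycleType_iff (α := Fin n) (m := lam.parts.filter (· ≠ 1))).2
      ⟨by rw [Fintype.card_fin]; omega, fun i hi => by
        have := lam.parts_pos (Multiset.mem_filter.1 hi).1
        have := (Multiset.mem_filter.1 hi).2
        omega⟩
  exact ⟨ω, by simp [conjClass, hω]⟩

variable {lam}

theorem card_fixedPoints_of_mem_conjClass {ω : Perm (Fin n)} (hω : ω ∈ conjClass n lam) :
    #{x | ω x = x} = lam.parts.count 1 := by
  have hsupp : #ω.support + lam.parts.count 1 = n := by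
    rw [← Perm.sum_cycleType, (mem_filter.1 hω).2, lam.sum_filter_ne_one_add_count_one]
  have hcompl : ({x | ω x = x} : Finset (Fin n)) = ω.supportᶜ := by
    ext x
    simp [Perm.mem_support]
  rw [hcompl, card_compl, Fintype.card_fin]
  omega

theorem card_twoCycle_points_of_mem_conjClass {ω : Perm (Fin n)} (hω : ω ∈ conjClass n lam) :
    #{x | ω (ω x) = x ∧ ω x ≠ x} = 2 * lam.parts.count 2 := by
  rw [Perm.card_filter_apply_apply_eq_self_and_ne, (mem_filter.1 hω).2,
    Multiset.count_filter_of_pos (by decide)]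

theorem card_offDiag_mul_card_filter_fixed {a b : Fin n} (hab : a ≠ b) :
    (n * n - n) * #{ω ∈ conjClass n lam | ω a = a ∧ ω b = b}
      = #(conjClass n lam) * (lam.parts.count 1 * lam.parts.count 1 - lam.parts.count 1) := by
  have h := card_offDiag_mul_card_filter (conj_mem_conjClass lam)
    (fun a b ω => ω a = a ∧ ω b = b) (by simp [Perm.mul_apply]) hab
  rw [offDiag_card, card_univ, Fintype.card_fin] at h
  rw [h, ← smul_eq_mul, ← sum_const]
  refine sum_congr rfl fun ω hω => ?_
  rw [← card_fixedPoints_of_mem_conjClass hω, ← offDiag_card]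
  congr 1
  ext ⟨x, y⟩
  simp only [mem_filter, mem_offDiag, mem_univ, true_and]
  tauto

theorem card_offDiag_mul_card_filter_swapped {a b : Fin n} (hab : a ≠ b) :
    (n * n - n) * #{ω ∈ conjClass n lam | ω a = b ∧ ω b = a}
      = #(conjClass n lam) * (2 * lam.parts.count 2) := by
  have h := card_offDiag_mul_card_filter (conj_mem_conjClass lam)
    (fun a b ω => ω a = b ∧ ω b = a) (by simp [Perm.mul_apply]) hab
  rw [offDiag_card, card_univ, Fintype.card_fin] at h
  rw [h, ← smul_eq_mul, ← sum_const]
  refine sum_congr rfl fun ω hω => ?_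
  rw [Perm.card_filter_offDiag_swapped, card_twoCycle_points_of_mem_conjClass hω]

end ConjClass

section Baj

variable {n : ℕ}

def bajWeightSum (n : ℕ) : ℕ := ∑ i : Fin n, ((i : ℕ) + 1) * (n - ((i : ℕ) + 1))

theorem sum_baj_eq (C : Finset (Perm (Fin n))) :
    ∑ ω ∈ C, baj ω = ∑ i ∈ univ.filter (fun i : Fin n => (i : ℕ) + 1 < n),
      #{ω ∈ C | ω (succMod i) < ω i} * (((i : ℕ) + 1) * (n - ((i : ℕ) + 1))) := by
  have hbaj : ∀ ω : Perm (Fin n), baj ω =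
      ∑ i ∈ univ.filter (fun i : Fin n => (i : ℕ) + 1 < n),
        if ω (succMod i) < ω i then ((i : ℕ) + 1) * (n - ((i : ℕ) + 1)) else 0 := fun ω => by
    rw [baj, ← filter_filter, sum_filter]
  rw [sum_congr rfl fun ω _ => hbaj ω, sum_comm]
  refine sum_congr rfl fun i _ => ?_
  rw [← sum_filter, sum_const, smul_eq_mul]

theorem covBy_succMod {i : Fin n} (hi : (i : ℕ) + 1 < n) : i ⋖ succMod i := by
  simp [Fin.covBy_iff, succMod, Nat.mod_eq_of_lt hi]

theorem two_mul_sum_baj_add {C : Finset (Perm (Fin n))}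
    (hC : ∀ ω ∈ C, ∀ g : Perm (Fin n), g * ω * g⁻¹ ∈ C) {a b : Fin n} (hab : a ≠ b) :
    2 * ∑ ω ∈ C, baj ω + #{ω ∈ C | ω a = a ∧ ω b = b} * bajWeightSum n
      = (#C + #{ω ∈ C | ω a = b ∧ ω b = a}) * bajWeightSum n := by
  have hW : ∑ i ∈ univ.filter (fun i : Fin n => (i : ℕ) + 1 < n),
      ((i : ℕ) + 1) * (n - ((i : ℕ) + 1)) = bajWeightSum n :=
    sum_filter_of_ne fun i _ hw => by
      contrapose! hw
      simp [Nat.sub_eq_zero_of_le hw]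
  rw [sum_baj_eq, ← hW, mul_sum, mul_sum, mul_sum, ← sum_add_distrib]
  refine sum_congr rfl fun i hi => ?_
  have h := (covBy_succMod (mem_filter.1 hi).2).two_mul_card_filter_lt_add hC
  have hne : i ≠ succMod i := (covBy_succMod (mem_filter.1 hi).2).lt.ne
  rw [card_filter_eq_of_conj_invariant hC (fun a b ω => ω a = a ∧ ω b = b)
      (by simp [Perm.mul_apply]) hab hne,
    card_filter_eq_of_conj_invariant hC (fun a b ω => ω a = b ∧ ω b = a)
      (by simp [Perm.mul_apply]) hab hne] at h
  rw [← mul_assoc, ← add_mul, h]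

theorem sum_range_succ_mul_sub (x : ℝ) (n : ℕ) :
    ∑ j ∈ range n, ((j : ℝ) + 1) * (x - (j + 1)) = n * (n + 1) * (3 * x - 2 * n - 1) / 6 := by
  induction n with
  | zero => simp
  | succ n ih => rw [sum_range_succ, ih]; push_cast; ring

theorem six_mul_bajWeightSum (n : ℕ) : 6 * (bajWeightSum n : ℝ) = (n + 1) * (n * n - n) := by
  have hcast : ∀ i : Fin n, ((((i : ℕ) + 1) * (n - ((i : ℕ) + 1)) : ℕ) : ℝ)
      = ((i : ℕ) + 1) * ((n : ℝ) - ((i : ℕ) + 1)) := fun i => by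
    push_cast [Nat.cast_sub (Fin.is_lt i)]
    rfl
  rw [bajWeightSum, Nat.cast_sum, sum_congr rfl fun i _ => hcast i,
    Fin.sum_univ_eq_sum_range (fun j => ((j : ℝ) + 1) * (n - (j + 1))), sum_range_succ_mul_sub]
  ring

end Baj

theorem stmt8 (n : ℕ) (hn : 3 ≤ n) (lam : n.Partition) (a1 a2 : ℕ)
    (ha1 : a1 = Multiset.count 1 lam.parts) (ha2 : a2 = Multiset.count 2 lam.parts) :
    (∑ ω ∈ conjClass n lam, (baj ω : ℝ)) / ((conjClass n lam).card : ℝ)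
      = ((n : ℝ) + 1) * ((n : ℝ) ^ 2 - (n : ℝ) + 2 * (a2 : ℝ) - (a1 : ℝ) ^ 2 + (a1 : ℝ))
        / 12 := by
  subst ha1 ha2
  let a : Fin n := ⟨0, by omega⟩
  let b : Fin n := ⟨1, by omega⟩
  have hab : a ≠ b := by simp [a, b, Fin.ext_iff]
  have hfix := card_offDiag_mul_card_filter_fixed (lam := lam) hab
  have hswap := card_offDiag_mul_card_filter_swapped (lam := lam) hab
  have hbaj := two_mul_sum_baj_add (conj_mem_conjClass lam) hab
  have hW := six_mul_bajWeightSum n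
  set N := #(conjClass n lam)
  set F := #{ω ∈ conjClass n lam | ω a = a ∧ ω b = b}
  set S := #{ω ∈ conjClass n lam | ω a = b ∧ ω b = a}
  have hN : (N : ℝ) ≠ 0 := by exact_mod_cast (conjClass_nonempty lam).card_ne_zero
  have hm : (n : ℝ) * n - n ≠ 0 := by
    have : (3 : ℝ) ≤ n := by exact_mod_cast hn
    nlinarith
  apply_fun ((↑) : ℕ → ℝ) at hfix hswap hbaj
  push_cast [Nat.cast_sub (Nat.le_mul_self _)] at hfix hswap hbaj
  rw [div_eq_div_iff hN (by norm_num)]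
  refine mul_left_cancel₀ hm ?_
  linear_combination 6 * ((n : ℝ) * n - n) * hbaj + ((n : ℝ) * n - n) * ((N : ℝ) + S - F) * hW
    + ((n : ℝ) + 1) * ((n : ℝ) * n - n) * (hswap - hfix)
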